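/- Let (X,d) and (X',d') be compact metric spaces, φ : X → X and ψ : X' → X' continuous maps, and suppose ψ is a factor of φ, i.e. there exists a continuous surjective map h : X → X' with ψ ∘ h = h ∘ φ. Then C(φ) ≥ C(ψ), C̲(φ) ≥ C̲(ψ), and C*(φ) ≥ C*(ψ). -/

import Mathlib

open Filter Set Metric
open scoped ENNReal Topology

/-- The dynamical distance of order `n` associated with the map `φ`:
`d_n^φ(x,y) = max_{0 ≤ k ≤ n-1} d(φ^k x, φ^k y)`. -/
noncomputable def dynDist {X : Type*} [MetricSpace X] (φ : X → X) (n : ℕ) (x y : X) : ℝ :=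
  ⨆ k : Fin n, dist (φ^[(k : ℕ)] x) (φ^[(k : ℕ)] y)

/-- The open `(n,ε)`-ball centered at `x` for the dynamical distance `d_n^φ`. -/
def dynBall {X : Type*} [MetricSpace X] (φ : X → X) (n : ℕ) (x : X) (ε : ℝ) : Set X :=
  {y | dynDist φ n x y < ε}

/-- `G_n(Y,ε)`: the minimal number of `(n,ε)`-balls (centers anywhere in `X`)
needed to cover `Y`. -/
noncomputable def coverNum {X : Type*} [MetricSpace X] (φ : X → X) (n : ℕ) (Y : Set X)
    (ε : ℝ) : ℕ :=
  sInf {m : ℕ | ∃ t : Finset X, t.card = m ∧ Y ⊆ ⋃ x ∈ t, dynBall φ n x ε}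

/-- The (upper) complexity index `C(φ,Y) = sup_{ε>0} limsup_n log G_n(Y,ε) / log n`. -/
noncomputable def upperComplexity {X : Type*} [MetricSpace X] (φ : X → X) (Y : Set X) : ℝ≥0∞ :=
  ⨆ (ε : ℝ) (_ : 0 < ε),
    Filter.limsup
      (fun n : ℕ => ENNReal.ofReal (Real.log (coverNum φ n Y ε) / Real.log n)) Filter.atTop

/-- The lower complexity index `C̲(φ,Y) = sup_{ε>0} liminf_n log G_n(Y,ε) / log n`. -/
noncomputable def lowerComplexity {X : Type*} [MetricSpace X] (φ : X → X) (Y : Set X) : ℝ≥0∞ :=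
  ⨆ (ε : ℝ) (_ : 0 < ε),
    Filter.liminf
      (fun n : ℕ => ENNReal.ofReal (Real.log (coverNum φ n Y ε) / Real.log n)) Filter.atTop

/-- The weight `M(C,s) = Σ_i (1/n_i)^s` of a (countable) family of dynamical balls, the
family being encoded as a set of pairs `(center, order)`. -/
noncomputable def coverWeight {X : Type*} [MetricSpace X] (s : ℝ) (S : Set (X × ℕ)) : ℝ≥0∞ :=
  ∑' p : S, ((p : X × ℕ).2 : ℝ≥0∞)⁻¹ ^ s

/-- A covering of `Y` of order `≥ N` at scale `ε`: a countable family of `(n_i,ε)`-balls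
with all `n_i ≥ N` whose union contains `Y`. -/
def IsDynCover {X : Type*} [MetricSpace X] (φ : X → X) (Y : Set X) (ε : ℝ) (N : ℕ)
    (S : Set (X × ℕ)) : Prop :=
  S.Countable ∧ (∀ p ∈ S, N ≤ p.2) ∧ Y ⊆ ⋃ p ∈ S, dynBall φ p.2 p.1 ε

/-- `δ(Y,ε,s,N)`: the infimum of the weights of coverings of `Y` of order `≥ N`. -/
noncomputable def dynDelta {X : Type*} [MetricSpace X] (φ : X → X) (Y : Set X) (ε s : ℝ)
    (N : ℕ) : ℝ≥0∞ :=
  ⨅ (S : Set (X × ℕ)) (_ : IsDynCover φ Y ε N S), coverWeight s S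

/-- `Δ(Y,ε,s) = sup_{N ≥ 1} δ(Y,ε,s,N)`. -/
noncomputable def dynDeltaSup {X : Type*} [MetricSpace X] (φ : X → X) (Y : Set X)
    (ε s : ℝ) : ℝ≥0∞ :=
  ⨆ (N : ℕ) (_ : 1 ≤ N), dynDelta φ Y ε s N

/-- The critical value `s_c(Y,ε) = inf {s ≥ 0 | Δ(Y,ε,s) = 0}`, as an element of `[0,∞]`
(with `inf ∅ = +∞`). -/
noncomputable def critVal {X : Type*} [MetricSpace X] (φ : X → X) (Y : Set X) (ε : ℝ) : ℝ≥0∞ :=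
  sInf {c : ℝ≥0∞ | ∃ s : ℝ, 0 ≤ s ∧ c = ENNReal.ofReal s ∧ dynDeltaSup φ Y ε s = 0}

/-- The weak complexity index `C*(φ,Y) = sup_{ε>0} s_c(Y,ε)`. -/
noncomputable def weakComplexity {X : Type*} [MetricSpace X] (φ : X → X) (Y : Set X) : ℝ≥0∞ :=
  ⨆ (ε : ℝ) (_ : 0 < ε), critVal φ Y ε

/-!
A factor map `h` is uniformly continuous, so for every `ε > 0` there is `δ > 0` such that `h`
maps each `(n,δ)`-ball of `φ` into the `(n,ε)`-ball of `ψ` around the image of its center (the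
iterates are intertwined by `h`). Pushing a cover of `X` forward along the surjection `h` thus
gives a cover of `X'` by at most as many balls of the same orders. Hence both the covering
numbers and the weights `δ(·,·,s,N)` at scale `ε` for `ψ` are bounded by those at scale `δ`
for `φ`, and all three indices compare.
-/

section DynamicalBalls

variable {X : Type*} [MetricSpace X] {φ : X → X} {n : ℕ} {x y : X} {ε : ℝ}

lemma dist_iterate_le_dynDist (k : Fin n) :
    dist (φ^[k] x) (φ^[k] y) ≤ dynDist φ n x y :=
  le_ciSup (f := fun k : Fin n => dist (φ^[k] x) (φ^[k] y)) (Set.finite_range _).bddAbove k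

lemma dynDist_lt_iff (hε : 0 < ε) :
    dynDist φ n x y < ε ↔ ∀ k : Fin n, dist (φ^[k] x) (φ^[k] y) < ε := by
  refine ⟨fun H k => (dist_iterate_le_dynDist k).trans_lt H, fun H => ?_⟩
  rcases isEmpty_or_nonempty (Fin n) with hn | hn
  · simpa [dynDist, Real.iSup_of_isEmpty] using hε
  · obtain ⟨i, hi⟩ := Finite.exists_max fun k : Fin n => dist (φ^[k] x) (φ^[k] y)
    exact (ciSup_le hi).trans_lt (H i)

lemma mem_dynBall_self (hε : 0 < ε) : x ∈ dynBall φ n x ε :=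
  (dynDist_lt_iff hε).2 fun k => by simpa using hε

lemma isOpen_dynBall (hφ : Continuous φ) (hε : 0 < ε) : IsOpen (dynBall φ n x ε) := by
  have : dynBall φ n x ε = ⋂ k : Fin n, φ^[k] ⁻¹' ball (φ^[k] x) ε := by
    ext y
    simp only [dynBall, mem_ofPred_eq, dynDist_lt_iff hε, mem_iInter, mem_preimage, mem_ball,
      dist_comm]
  rw [this]
  exact isOpen_iInter_of_finite fun k => isOpen_ball.preimage (hφ.iterate _)

lemma coverNum_le_card {Y : Set X} {t : Finset X} (ht : Y ⊆ ⋃ x ∈ t, dynBall φ n x ε) :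
    coverNum φ n Y ε ≤ t.card :=
  Nat.sInf_le ⟨t, rfl, ht⟩

lemma exists_card_eq_coverNum [CompactSpace X] (hφ : Continuous φ) (n : ℕ) (Y : Set X)
    (hε : 0 < ε) :
    ∃ t : Finset X, t.card = coverNum φ n Y ε ∧ Y ⊆ ⋃ x ∈ t, dynBall φ n x ε := by
  obtain ⟨t, ht⟩ := isCompact_univ.elim_finite_subcover (fun x : X => dynBall φ n x ε)
    (fun x => isOpen_dynBall hφ hε) fun x _ => mem_iUnion.2 ⟨x, mem_dynBall_self hε⟩
  exact Nat.sInf_mem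
    (s := {m | ∃ t : Finset X, t.card = m ∧ Y ⊆ ⋃ x ∈ t, dynBall φ n x ε})
    ⟨t.card, t, rfl, (subset_univ Y).trans ht⟩

end DynamicalBalls

lemma ofReal_log_div_log_le_of_le {a b : ℕ} (hab : a ≤ b) (n : ℕ) :
    ENNReal.ofReal (Real.log a / Real.log n) ≤ ENNReal.ofReal (Real.log b / Real.log n) := by
  refine ENNReal.ofReal_le_ofReal (div_le_div_of_nonneg_right ?_ (Real.log_natCast_nonneg n))
  rcases Nat.eq_zero_or_pos a with rfl | ha
  · simpa using Real.log_natCast_nonneg b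
  · exact Real.log_le_log (by exact_mod_cast ha) (by exact_mod_cast hab)

lemma coverWeight_image_prodMap_le {X X' : Type*} [MetricSpace X] [MetricSpace X']
    (f : X → X') (s : ℝ) (S : Set (X × ℕ)) :
    coverWeight s (Prod.map f id '' S) ≤ coverWeight s S :=
  ENNReal.tsum_le_tsum_comp_of_surjective imageFactorization_surjective _

lemma critVal_le_of_dynDeltaSup_le {X X' : Type*} [MetricSpace X] [MetricSpace X']
    {φ : X → X} {ψ : X' → X'} {Y : Set X} {Y' : Set X'} {ε ε' : ℝ}
    (H : ∀ s, dynDeltaSup ψ Y' ε' s ≤ dynDeltaSup φ Y ε s) :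
    critVal ψ Y' ε' ≤ critVal φ Y ε := by
  refine sInf_le_sInf ?_
  rintro c ⟨s, hs, rfl, hzero⟩
  exact ⟨s, hs, rfl, le_zero_iff.1 (hzero ▸ H s)⟩

section Semiconj

variable {X X' : Type*} [MetricSpace X] [MetricSpace X'] {φ : X → X} {ψ : X' → X'}
  {h : X → X'} {ε δ : ℝ}

lemma mapsTo_dynBall (hsemi : Function.Semiconj h φ ψ) (hε : 0 < ε)
    (hmod : ∀ ⦃a b : X⦄, dist a b < δ → dist (h a) (h b) < ε) (n : ℕ) (x : X) :
    MapsTo h (dynBall φ n x δ) (dynBall ψ n (h x) ε) := by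
  intro y hy
  refine (dynDist_lt_iff hε).2 fun k => ?_
  rw [← (hsemi.iterate_right k).eq, ← (hsemi.iterate_right k).eq]
  exact hmod ((dist_iterate_le_dynDist k).trans_lt hy)

lemma image_subset_biUnion_dynBall (hsemi : Function.Semiconj h φ ψ) (hε : 0 < ε)
    (hmod : ∀ ⦃a b : X⦄, dist a b < δ → dist (h a) (h b) < ε) {ι : Type*} {I : Set ι}
    {order : ι → ℕ} {center : ι → X} {Y : Set X}
    (hY : Y ⊆ ⋃ i ∈ I, dynBall φ (order i) (center i) δ) :
    h '' Y ⊆ ⋃ i ∈ I, dynBall ψ (order i) (h (center i)) ε := by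
  rintro _ ⟨y, hy, rfl⟩
  obtain ⟨i, hi, hyi⟩ := mem_iUnion₂.1 (hY hy)
  exact mem_iUnion₂.2 ⟨i, hi, mapsTo_dynBall hsemi hε hmod _ _ hyi⟩

lemma coverNum_image_le [CompactSpace X] (hφ : Continuous φ) (hsemi : Function.Semiconj h φ ψ)
    (hε : 0 < ε) (hδ : 0 < δ)
    (hmod : ∀ ⦃a b : X⦄, dist a b < δ → dist (h a) (h b) < ε) (n : ℕ) (Y : Set X) :
    coverNum ψ n (h '' Y) ε ≤ coverNum φ n Y δ := by
  classical
  obtain ⟨t, hcard, hcover⟩ := exists_card_eq_coverNum hφ n Y hδ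
  calc coverNum ψ n (h '' Y) ε ≤ (t.image h).card := by
        refine coverNum_le_card ?_
        rw [Finset.set_biUnion_finset_image]
        exact image_subset_biUnion_dynBall hsemi hε hmod hcover
    _ ≤ t.card := Finset.card_image_le
    _ = coverNum φ n Y δ := hcard

lemma IsDynCover.image (hsemi : Function.Semiconj h φ ψ) (hε : 0 < ε)
    (hmod : ∀ ⦃a b : X⦄, dist a b < δ → dist (h a) (h b) < ε) {Y : Set X} {N : ℕ}
    {S : Set (X × ℕ)} (hS : IsDynCover φ Y δ N S) :
    IsDynCover ψ (h '' Y) ε N (Prod.map h id '' S) := by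
  obtain ⟨hcount, horder, hcover⟩ := hS
  refine ⟨hcount.image _, forall_mem_image.2 fun p hp => horder p hp, ?_⟩
  rw [biUnion_image]
  exact image_subset_biUnion_dynBall hsemi hε hmod hcover

lemma dynDelta_image_le (hsemi : Function.Semiconj h φ ψ) (hε : 0 < ε)
    (hmod : ∀ ⦃a b : X⦄, dist a b < δ → dist (h a) (h b) < ε)
    (Y : Set X) (s : ℝ) (N : ℕ) :
    dynDelta ψ (h '' Y) ε s N ≤ dynDelta φ Y δ s N :=
  le_iInf₂ fun S hS =>
    (iInf₂_le _ (hS.image hsemi hε hmod)).trans (coverWeight_image_prodMap_le h s S)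

end Semiconj

theorem complexity_factor_general {X X' : Type*}
    [MetricSpace X] [CompactSpace X] [MetricSpace X'] [CompactSpace X']
    (φ : X → X) (hφ : Continuous φ) (ψ : X' → X')
    (h : X → X') (hc : Continuous h) (hsurj : Function.Surjective h)
    (hcomm : ψ ∘ h = h ∘ φ) :
    upperComplexity ψ Set.univ ≤ upperComplexity φ Set.univ ∧
    lowerComplexity ψ Set.univ ≤ lowerComplexity φ Set.univ ∧
    weakComplexity ψ Set.univ ≤ weakComplexity φ Set.univ := by
  have hsemi : Function.Semiconj h φ ψ := fun x => (congrFun hcomm x).symm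
  have hscale : ∀ ε > 0, ∃ δ > 0, (∀ n, coverNum ψ n univ ε ≤ coverNum φ n univ δ) ∧
      ∀ s N, dynDelta ψ univ ε s N ≤ dynDelta φ univ δ s N := by
    intro ε hε
    obtain ⟨δ, hδ, hmod⟩ :=
      Metric.uniformContinuous_iff.1 (CompactSpace.uniformContinuous_of_continuous hc) ε hε
    rw [← hsurj.range_eq, ← image_univ]
    exact ⟨δ, hδ, fun n => coverNum_image_le hφ hsemi hε hδ hmod n univ,
      fun s N => dynDelta_image_le hsemi hε hmod univ s N⟩
  refine ⟨iSup₂_le fun ε hε => ?_, iSup₂_le fun ε hε => ?_, iSup₂_le fun ε hε => ?_⟩ <;>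
    obtain ⟨δ, hδ, hcoverNum, hdynDelta⟩ := hscale ε hε <;>
    refine le_iSup₂_of_le δ hδ ?_
  · exact limsup_le_limsup (.of_forall fun n => ofReal_log_div_log_le_of_le (hcoverNum n) n)
  · exact liminf_le_liminf (.of_forall fun n => ofReal_log_div_log_le_of_le (hcoverNum n) n)
  · exact critVal_le_of_dynDeltaSup_le fun s => iSup₂_mono fun N _ => hdynDelta s N

/-- if `ψ` is a factor of `φ` then `C(φ) ≥ C(ψ)`, `C̲(φ) ≥ C̲(ψ)` and
`C*(φ) ≥ C*(ψ)`. -/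
theorem complexity_factor {X X' : Type*}
    [MetricSpace X] [CompactSpace X] [MetricSpace X'] [CompactSpace X']
    (φ : X → X) (hφ : Continuous φ) (ψ : X' → X') (hψ : Continuous ψ)
    (h : X → X') (hc : Continuous h) (hsurj : Function.Surjective h)
    (hcomm : ψ ∘ h = h ∘ φ) :
    upperComplexity ψ Set.univ ≤ upperComplexity φ Set.univ ∧
    lowerComplexity ψ Set.univ ≤ lowerComplexity φ Set.univ ∧
    weakComplexity ψ Set.univ ≤ weakComplexity φ Set.univ :=
  complexity_factor_general φ hφ ψ h hc hsurj hcomm
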